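/- arXiv:2205.05552 — 4 statements merged into one kernel-verified Lean document; each statement's English description precedes it below -/
import Mathlib

section
/- Let θ : [0,∞) → [0,∞) be a continuous, strictly increasing bijection with θ(0) = 0. Let a ∈ ℝⁿ and r > 0, and let B = B(a,r) be the open ball of radius r about a. Then the weak Henstock–Orlicz quasinorm of the characteristic function of B satisfies ‖χ_{B(a,r)}‖_{w,θ} = 1 / θ⁻¹(1 / volume(B(a,r))). -/
open MeasureTheory Filter ENNReal

/-- The weak Henstock–Orlicz quasinorm:
`inf {α > 0 : ∀ t > 0, θ(t)·volume{x : |h x| > α·t} ≤ 1}` with `inf ∅ = ∞`. -/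
noncomputable def wNorm (n : ℕ) (θ : ℝ → ℝ) (h : EuclideanSpace ℝ (Fin n) → ℝ) : ℝ≥0∞ :=
  sInf (ENNReal.ofReal '' {a : ℝ | 0 < a ∧
    ∀ t : ℝ, 0 < t → ENNReal.ofReal (θ t) * volume {x | a * t < |h x|} ≤ 1})

/-- A Young function: `θ : [0,∞) → [0,∞)`, `θ 0 = 0`, nondecreasing, continuous,
and `θ t → ∞` as `t → ∞`. -/
structure IsYoung (θ : ℝ → ℝ) : Prop where
  nonneg : ∀ t : ℝ, 0 ≤ t → 0 ≤ θ t
  zero : θ 0 = 0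
  mono : MonotoneOn θ (Set.Ici 0)
  cont : ContinuousOn θ (Set.Ici 0)
  tends : Tendsto θ atTop atTop

/-- The class `𝔉` of Young functions: strictly increasing, bijective from `[0,∞)`
onto `[0,∞)`, continuous and concave. -/
structure MemF (θ : ℝ → ℝ) extends IsYoung θ : Prop where
  strictMono : StrictMonoOn θ (Set.Ici 0)
  bijOn : Set.BijOn θ (Set.Ici 0) (Set.Ici 0)
  concave : ConcaveOn ℝ (Set.Ici 0) θ

/-- The Δ₂-condition: `θ(2t) ≤ C·θ(t)` for all `t > 0`, for some constant `C > 0`. -/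
def Delta2 (θ : ℝ → ℝ) : Prop := ∃ C : ℝ, 0 < C ∧ ∀ t : ℝ, 0 < t → θ (2 * t) ≤ C * θ t

/-- The modular `Υ_θ(h) = sup_{t>0} θ(t)·volume{x : |h x| > t}`, valued in `[0,∞]`. -/
noncomputable def modular (n : ℕ) (θ : ℝ → ℝ) (h : EuclideanSpace ℝ (Fin n) → ℝ) : ℝ≥0∞ :=
  ⨆ (t : ℝ) (_ : 0 < t), ENNReal.ofReal (θ t) * volume {x | t < |h x|}

/-- The Luxemburg norm `inf {α > 0 : ∫⁻ θ(|h|/α) ≤ 1}` with `inf ∅ = ∞`. -/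
noncomputable def luxNorm (n : ℕ) (θ : ℝ → ℝ) (h : EuclideanSpace ℝ (Fin n) → ℝ) : ℝ≥0∞ :=
  sInf (ENNReal.ofReal '' {a : ℝ | 0 < a ∧
    (∫⁻ x, ENNReal.ofReal (θ (|h x| / a)) ∂volume) ≤ 1})

/-! Every superlevel set `{|χ_E| > c}` with `c ≥ 0` is `E` or `∅`, so the weak condition at height
`t` reads `θ(t)·|E| ≤ 1` for `t < 1/α` and is void otherwise. With `θ(s) = 1/|E|`, strict
monotonicity turns this into `t ≤ s` for all `t < 1/α`, i.e. `α ≥ 1/s`; the admissible `α` form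
`[1/s, ∞)`, whose infimum is `1/s = 1/θ⁻¹(1/|E|)`. -/

section Indicator

variable {α : Type*} (E : Set α)

lemma setOf_lt_abs_indicator_one_of_lt {c : ℝ} (hc₀ : 0 ≤ c) (hc₁ : c < 1) :
    {x | c < |E.indicator (fun _ => (1 : ℝ)) x|} = E := by
  ext x
  by_cases hx : x ∈ E <;> simp [hx, hc₁, hc₀.not_gt]

lemma setOf_lt_abs_indicator_one_of_le {c : ℝ} (hc : 1 ≤ c) :
    {x | c < |E.indicator (fun _ => (1 : ℝ)) x|} = ∅ := by
  ext x
  by_cases hx : x ∈ E <;> simp [hx, hc, (zero_le_one.trans hc).not_gt]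

end Indicator

lemma StrictMonoOn.ofReal_mul_ofReal_le_one_iff {θ : ℝ → ℝ} (hθ : StrictMonoOn θ (Set.Ici 0))
    {V s t : ℝ} (hV : 0 < V) (hs₀ : 0 ≤ s) (hs : θ s = 1 / V) (ht : 0 ≤ t) :
    ENNReal.ofReal (θ t) * ENNReal.ofReal V ≤ 1 ↔ t ≤ s := by
  rw [← ENNReal.ofReal_mul' hV.le, ENNReal.ofReal_le_one, ← le_div_iff₀ hV, ← hs]
  exact hθ.le_iff_le ht hs₀

lemma forall_ofReal_mul_measure_lt_abs_indicator_le_one_iff {α : Type*} [MeasurableSpace α]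
    (μ : Measure α) (E : Set α) (hE₀ : μ E ≠ 0) (hE : μ E ≠ ∞)
    {θ : ℝ → ℝ} (hθ : StrictMonoOn θ (Set.Ici 0)) {s : ℝ} (hs₀ : 0 < s)
    (hs : θ s = 1 / (μ E).toReal) {b : ℝ} (hb : 0 < b) :
    (∀ t : ℝ, 0 < t →
      ENNReal.ofReal (θ t) * μ {x | b * t < |E.indicator (fun _ => (1 : ℝ)) x|} ≤ 1) ↔
      1 / s ≤ b := by
  have hV : 0 < (μ E).toReal := ENNReal.toReal_pos hE₀ hE
  have hcond : ∀ t : ℝ, 0 < t →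
      (ENNReal.ofReal (θ t) * μ {x | b * t < |E.indicator (fun _ => (1 : ℝ)) x|} ≤ 1 ↔
        (t < 1 / b → t ≤ s)) := by
    intro t ht
    rcases lt_or_ge (b * t) 1 with hbt | hbt
    · have htb : t < 1 / b := by rw [lt_div_iff₀ hb]; linarith
      rw [setOf_lt_abs_indicator_one_of_lt E (by positivity) hbt, ← ENNReal.ofReal_toReal hE,
        hθ.ofReal_mul_ofReal_le_one_iff hV hs₀.le hs ht.le]
      exact ⟨fun h _ => h, fun h => h htb⟩
    · have htb : ¬ t < 1 / b := by rw [lt_div_iff₀ hb]; linarith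
      rw [setOf_lt_abs_indicator_one_of_le E hbt, measure_empty, mul_zero]
      exact iff_of_true zero_le_one fun h => absurd h htb
  rw [one_div_le hs₀ hb, ← forall_lt_imp_le_iff_le_of_dense]
  refine ⟨fun h t htb => ?_, fun h t ht => (hcond t ht).2 (h t)⟩
  rcases le_or_gt t 0 with ht | ht
  · linarith
  · exact (hcond t ht).1 (h t ht) htb

lemma wNorm_indicator_one {n : ℕ} (E : Set (EuclideanSpace ℝ (Fin n)))
    (hE₀ : volume E ≠ 0) (hE : volume E ≠ ∞)
    {θ : ℝ → ℝ} (hθ : StrictMonoOn θ (Set.Ici 0)) {s : ℝ} (hs₀ : 0 < s)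
    (hs : θ s = 1 / (volume E).toReal) :
    wNorm n θ (E.indicator fun _ => (1 : ℝ)) = ENNReal.ofReal (1 / s) := by
  have hadm : {b : ℝ | 0 < b ∧ ∀ t : ℝ, 0 < t → ENNReal.ofReal (θ t) *
      volume {x | b * t < |E.indicator (fun _ => (1 : ℝ)) x|} ≤ 1} = Set.Ici (1 / s) := by
    ext b
    refine ⟨fun ⟨hb, h⟩ => ?_, fun hb => ?_⟩
    · exact (forall_ofReal_mul_measure_lt_abs_indicator_le_one_iff
        volume E hE₀ hE hθ hs₀ hs hb).1 h
    · have hb₀ : 0 < b := (one_div_pos.2 hs₀).trans_le hb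
      exact ⟨hb₀, (forall_ofReal_mul_measure_lt_abs_indicator_le_one_iff
        volume E hE₀ hE hθ hs₀ hs hb₀).2 hb⟩
  rw [wNorm, hadm]
  refine le_antisymm (sInf_le ⟨1 / s, Set.self_mem_Ici, rfl⟩) (le_sInf ?_)
  rintro _ ⟨b, hb, rfl⟩
  exact ENNReal.ofReal_le_ofReal hb

theorem stmt_9_general (n : ℕ) (θ θinv : ℝ → ℝ)
    (hzero : θ 0 = 0)
    (hsm : StrictMonoOn θ (Set.Ici 0)) (hbij : Set.BijOn θ (Set.Ici 0) (Set.Ici 0))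
    (hinv1 : ∀ t : ℝ, 0 ≤ t → θinv (θ t) = t)
    (a : EuclideanSpace ℝ (Fin n)) (r : ℝ) (hr : 0 < r) :
    wNorm n θ (Set.indicator (Metric.ball a r) (fun _ => (1 : ℝ))) =
      ENNReal.ofReal (1 / θinv (1 / (volume (Metric.ball a r)).toReal)) := by
  have hB₀ : volume (Metric.ball a r) ≠ 0 := (Metric.measure_ball_pos _ _ hr).ne'
  have hB : volume (Metric.ball a r) ≠ ∞ := measure_ball_lt_top.ne
  have hV : 0 < 1 / (volume (Metric.ball a r)).toReal :=
    one_div_pos.2 (ENNReal.toReal_pos hB₀ hB)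
  obtain ⟨s, hs₀ : 0 ≤ s, hs⟩ := hbij.surjOn (Set.mem_Ici.2 hV.le)
  have hs_pos : 0 < s := hs₀.lt_of_ne <| by rintro rfl; rw [hzero] at hs; exact hV.ne hs
  rw [← hs, hinv1 s hs₀]
  exact wNorm_indicator_one _ hB₀ hB hsm hs_pos hs

theorem stmt_9 (n : ℕ) (hn : 1 ≤ n) (θ θinv : ℝ → ℝ)
    (hzero : θ 0 = 0) (hc : ContinuousOn θ (Set.Ici 0))
    (hsm : StrictMonoOn θ (Set.Ici 0)) (hbij : Set.BijOn θ (Set.Ici 0) (Set.Ici 0))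
    (hinv1 : ∀ t : ℝ, 0 ≤ t → θinv (θ t) = t)
    (hinv2 : ∀ t : ℝ, 0 ≤ t → θ (θinv t) = t)
    (a : EuclideanSpace ℝ (Fin n)) (r : ℝ) (hr : 0 < r) :
    wNorm n θ (Set.indicator (Metric.ball a r) (fun _ => (1 : ℝ))) =
      ENNReal.ofReal (1 / θinv (1 / (volume (Metric.ball a r)).toReal)) :=
  stmt_9_general n θ θinv hzero hsm hbij hinv1 a r hr
end

section
/- Let θ₁ and θ₂ be Young functions in the class 𝔉 and suppose there is a constant C > 0 such that ‖h‖_{w,θ₁} ≤ C·‖h‖_{w,θ₂} for every measurable h : ℝⁿ → ℝ. Then there exists a constant C' > 0 such that θ₁(t) ≤ θ₂(C'·t) for all t > 0. -/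
open MeasureTheory Filter ENNReal

/-!
Test the hypothesis on `h = s·𝟙_E`, where `θ₂(s) = θ₁(t)` and `|E| = 1/θ₁(t)`. Then
`θ₂(τ)·|{|h| > τ}| ≤ θ₂(s)·|E| = 1` for every `τ`, so `‖h‖_{w,θ₂} ≤ 1`; whereas any admissible
`α < s/t` for `θ₁` would give `θ₁(τ)·|E| ≤ 1` for some `τ > t`, contradicting strict monotonicity,
so `‖h‖_{w,θ₁} ≥ s/t`. Hence `s ≤ C t` and `θ₁(t) = θ₂(s) ≤ θ₂(C t)`.
-/

theorem MeasureTheory.Measure.exists_measurableSet_addHaar_eq {E : Type*} [NormedAddCommGroup E]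
    [NormedSpace ℝ E] [MeasurableSpace E] [BorelSpace E] [FiniteDimensional ℝ E] [Nontrivial E]
    (μ : Measure E) [μ.IsAddHaarMeasure] {V : ℝ≥0∞} (hV : V ≠ ∞) :
    ∃ S : Set E, MeasurableSet S ∧ μ S = V := by
  set d := Module.finrank ℝ E
  have hd : d ≠ 0 := Module.finrank_pos.ne'
  have hB₀ : μ (Metric.ball 0 1) ≠ 0 := (Metric.measure_ball_pos μ 0 one_pos).ne'
  have hB : μ (Metric.ball 0 1) ≠ ∞ := measure_ball_lt_top.ne
  -- `μ (ball 0 r) = r ^ d * μ (ball 0 1)`, so take `r = (V / μ (ball 0 1)) ^ (1 / d)`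
  refine ⟨Metric.ball 0 ((V / μ (Metric.ball 0 1)).toReal ^ (d : ℝ)⁻¹), measurableSet_ball, ?_⟩
  rw [Measure.addHaar_ball _ _ (by positivity), ← Real.rpow_natCast, ← Real.rpow_mul toReal_nonneg,
    inv_mul_cancel₀ (Nat.cast_ne_zero.2 hd), Real.rpow_one, ofReal_toReal (div_ne_top hV hB₀),
    ENNReal.div_mul_cancel hB₀ hB]

theorem setOf_lt_abs_indicator_const_of_lt {α : Type*} (E : Set α) {s c : ℝ} (hc : 0 ≤ c)
    (hcs : c < |s|) : {x | c < |E.indicator (fun _ => s) x|} = E := by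
  ext x
  by_cases hx : x ∈ E <;> simp [hx, hcs, hc.not_gt]

theorem setOf_lt_abs_indicator_const_of_le {α : Type*} (E : Set α) {s c : ℝ} (hsc : |s| ≤ c) :
    {x | c < |E.indicator (fun _ => s) x|} = ∅ := by
  ext x
  by_cases hx : x ∈ E
  · simp [hx, hsc]
  · simp [hx, (abs_nonneg s).trans hsc]

theorem wNorm_indicator_const_le {n : ℕ} {θ : ℝ → ℝ} (hθ : MonotoneOn θ (Set.Ici 0))
    {E : Set (EuclideanSpace ℝ (Fin n))} {s a : ℝ} (ha : 0 < a)
    (hE : ENNReal.ofReal (θ (|s| / a)) * volume E ≤ 1) :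
    wNorm n θ (E.indicator fun _ => s) ≤ ENNReal.ofReal a := by
  refine sInf_le ⟨a, ⟨ha, fun τ hτ => ?_⟩, rfl⟩
  rcases lt_or_ge (a * τ) |s| with hlt | hle
  · rw [setOf_lt_abs_indicator_const_of_lt E (by positivity) hlt]
    have hτ_le : τ ≤ |s| / a := (le_div_iff₀' ha).2 hlt.le
    refine le_trans (mul_le_mul_left ?_ _) hE
    exact ofReal_le_ofReal (hθ hτ.le (Set.mem_Ici.2 (by positivity)) hτ_le)
  · simp [setOf_lt_abs_indicator_const_of_le E hle]

theorem le_wNorm_indicator_const {n : ℕ} {θ : ℝ → ℝ} {E : Set (EuclideanSpace ℝ (Fin n))}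
    {s t : ℝ} (ht : 0 < t) (hE : ∀ τ, t < τ → 1 < ENNReal.ofReal (θ τ) * volume E) :
    ENNReal.ofReal (|s| / t) ≤ wNorm n θ (E.indicator fun _ => s) := by
  refine le_sInf ?_
  rintro _ ⟨a, ⟨ha, hadm⟩, rfl⟩
  refine ofReal_le_ofReal (not_lt.1 fun hlt => ?_)
  obtain ⟨τ, htτ, hτs⟩ := exists_between ((lt_div_comm₀ ha ht).1 hlt)
  have hτ : 0 < τ := ht.trans htτ
  have hadmτ := hadm τ hτ
  rw [setOf_lt_abs_indicator_const_of_lt E (by positivity) ((lt_div_iff₀' ha).1 hτs)] at hadmτ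
  exact (hE τ htτ).not_ge hadmτ

namespace MemF

variable {θ : ℝ → ℝ}

theorem pos (hθ : MemF θ) {t : ℝ} (ht : 0 < t) : 0 < θ t := by
  simpa [hθ.zero] using hθ.strictMono Set.self_mem_Ici ht.le ht

theorem exists_pos_eq (hθ : MemF θ) {u : ℝ} (hu : 0 < u) : ∃ s, 0 < s ∧ θ s = u := by
  obtain ⟨s, hs, rfl⟩ := hθ.bijOn.surjOn hu.le
  refine ⟨s, (Set.mem_Ici.1 hs).lt_of_ne ?_, rfl⟩
  rintro rfl
  exact hu.ne' hθ.zero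

end MemF

theorem stmt_12 (n : ℕ) (hn : 1 ≤ n) (θ₁ θ₂ : ℝ → ℝ) (h1 : MemF θ₁) (h2 : MemF θ₂)
    (C : ℝ) (hC : 0 < C)
    (hle : ∀ h : EuclideanSpace ℝ (Fin n) → ℝ, Measurable h →
      wNorm n θ₁ h ≤ ENNReal.ofReal C * wNorm n θ₂ h) :
    ∃ C' : ℝ, 0 < C' ∧ ∀ t : ℝ, 0 < t → θ₁ t ≤ θ₂ (C' * t) := by
  refine ⟨C, hC, fun t ht => ?_⟩
  have hu : 0 < θ₁ t := h1.pos ht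
  obtain ⟨s, hs, hθs⟩ := h2.exists_pos_eq hu
  have : NeZero n := ⟨by omega⟩
  have hu₀ : ENNReal.ofReal (θ₁ t) ≠ 0 := (ofReal_pos.2 hu).ne'
  obtain ⟨E, hE, hvol⟩ := Measure.exists_measurableSet_addHaar_eq
    (volume : Measure (EuclideanSpace ℝ (Fin n))) (inv_ne_top.2 hu₀)
  have hnorm₂ : wNorm n θ₂ (E.indicator fun _ => s) ≤ 1 := by
    simpa using wNorm_indicator_const_le h2.mono one_pos (le_of_eq <| by
      rw [abs_of_pos hs, div_one, hθs, hvol, ENNReal.mul_inv_cancel hu₀ ofReal_ne_top])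
  have hE₁ : ∀ τ, t < τ → 1 < ENNReal.ofReal (θ₁ τ) * volume E := fun τ hτ => by
    rw [hvol, ← ENNReal.mul_inv_cancel hu₀ ofReal_ne_top]
    refine ENNReal.mul_lt_mul_left (ENNReal.inv_ne_zero.2 ofReal_ne_top) (inv_ne_top.2 hu₀) ?_
    exact (ofReal_lt_ofReal_iff (h1.pos (ht.trans hτ))).2
      (h1.strictMono ht.le (ht.trans hτ).le hτ)
  have hnorm₁ : ENNReal.ofReal (s / t) ≤ wNorm n θ₁ (E.indicator fun _ => s) := by
    simpa only [abs_of_pos hs] using le_wNorm_indicator_const (s := s) ht hE₁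
  have hst : s / t ≤ C := by
    rw [← ofReal_le_ofReal_iff hC.le]
    calc ENNReal.ofReal (s / t) ≤ wNorm n θ₁ (E.indicator fun _ => s) := hnorm₁
      _ ≤ ENNReal.ofReal C * wNorm n θ₂ (E.indicator fun _ => s) :=
        hle _ (measurable_const.indicator hE)
      _ ≤ ENNReal.ofReal C := (mul_le_mul_right hnorm₂ _).trans_eq (mul_one _)
  rw [← hθs]
  exact h2.mono hs.le (Set.mem_Ici.2 (by positivity)) ((div_le_iff₀ ht).1 hst)
end

section
/- Let θ₁ and θ₂ be Young functions in the class 𝔉. The following are equivalent: (1) there is a constant C > 0 with θ₁(t) ≤ θ₂(C·t) for all t > 0 (i.e. θ₁ Δ θ₂); (2) every measurable h : ℝⁿ → ℝ with ‖h‖_{w,θ₂} < ∞ satisfies ‖h‖_{w,θ₁} < ∞; (3) there is a constant C > 0 such that ‖h‖_{w,θ₁} ≤ C·‖h‖_{w,θ₂} for every measurable h : ℝⁿ → ℝ. -/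
open MeasureTheory Filter ENNReal

/-! (1) ⇒ (3): if `θ₁ t ≤ θ₂ (C t)`, every `α` admissible in the infimum defining `‖h‖_{w,θ₂}`
makes `C α` admissible for `‖h‖_{w,θ₁}`. (3) ⇒ (2) is immediate.
(2) ⇒ (1): the radial function `h x = θ₂⁻¹ (1 / (|B₁| ‖x‖ⁿ))` has `|{|h| > s}| = 1 / θ₂ s`
exactly, so `‖h‖_{w,θ₂} ≤ 1`; an `α` admissible for `‖h‖_{w,θ₁}` then gives
`θ₁ t ≤ θ₂ (α t)`. -/

open Set Metric Module

lemma MemF.pos_s13 {θ : ℝ → ℝ} (hθ : MemF θ) {s : ℝ} (hs : 0 < s) : 0 < θ s := by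
  simpa [hθ.zero] using hθ.strictMono self_mem_Ici hs.le hs

section Extremal

lemma exists_monotone_lt_iff_lt_of_bijOn {θ : ℝ → ℝ} (hθ : StrictMonoOn θ (Ici 0))
    (hbij : BijOn θ (Ici 0) (Ici 0)) :
    ∃ φ : ℝ → ℝ, Monotone φ ∧ (∀ u, 0 ≤ φ u) ∧ ∀ s u : ℝ, 0 ≤ s → (s < φ u ↔ θ s < u) := by
  set φ : ℝ → ℝ := fun u => Function.invFunOn θ (Ici 0) (max u 0)
  have hφ_mem (u : ℝ) : φ u ∈ Ici (0 : ℝ) :=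
    hbij.surjOn.mapsTo_invFunOn (le_max_right u 0)
  have hθφ (u : ℝ) : θ (φ u) = max u 0 := hbij.invOn_invFunOn.2 (le_max_right u 0)
  refine ⟨φ, fun u v huv => ?_, hφ_mem, fun s u hs => ?_⟩
  · rw [← hθ.le_iff_le (hφ_mem u) (hφ_mem v), hθφ, hθφ]
    exact max_le_max_right 0 huv
  · rw [← hθ.lt_iff_lt hs (hφ_mem u), hθφ, lt_max_iff, or_iff_left_iff_imp]
    exact fun h => absurd h (not_lt.2 (hbij.mapsTo hs))

variable {E : Type*} [NormedAddCommGroup E] [NormedSpace ℝ E] [FiniteDimensional ℝ E]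
  [MeasurableSpace E] [BorelSpace E] [Nontrivial E] (μ : Measure E) [μ.IsAddHaarMeasure]

lemma addHaar_setOf_norm_pow_finrank_mul_lt_one {c : ℝ} (hc : 0 < c) :
    μ {x | ‖x‖ ^ finrank ℝ E * c < 1} = ENNReal.ofReal c⁻¹ * μ (ball 0 1) := by
  have hd : finrank ℝ E ≠ 0 := finrank_pos.ne'
  set r : ℝ := c⁻¹ ^ ((finrank ℝ E : ℝ)⁻¹)
  have hr : 0 ≤ r := by positivity
  have hrd : r ^ finrank ℝ E = c⁻¹ := Real.rpow_inv_natCast_pow (by positivity) hd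
  have hset : {x : E | ‖x‖ ^ finrank ℝ E * c < 1} = ball 0 r := by
    ext x
    rw [mem_ofPred_eq, mem_ball_zero_iff, ← lt_div_iff₀ hc, one_div, ← hrd,
      pow_lt_pow_iff_left₀ (norm_nonneg x) hr hd]
  rw [hset, Measure.addHaar_ball μ 0 hr, hrd]

lemma exists_measurable_addHaar_setOf_lt_abs_eq_inv {θ : ℝ → ℝ} (hθ : MemF θ) :
    ∃ h : E → ℝ, Measurable h ∧
      ∀ s : ℝ, 0 < s → μ {x | s < |h x|} = (ENNReal.ofReal (θ s))⁻¹ := by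
  obtain ⟨φ, hφ_mono, hφ_nonneg, hφ⟩ := exists_monotone_lt_iff_lt_of_bijOn hθ.strictMono hθ.bijOn
  set B : ℝ≥0∞ := μ (ball 0 1)
  have hB0 : B ≠ 0 := (measure_ball_pos μ 0 one_pos).ne'
  have hBtop : B ≠ ⊤ := measure_ball_lt_top.ne
  set d := finrank ℝ E
  refine ⟨fun x => φ ((‖x‖ ^ d * B.toReal)⁻¹), ?_, fun s hs => ?_⟩
  · exact hφ_mono.measurable.comp (by fun_prop)
  have hθs : 0 < θ s := hθ.pos_s13 hs
  have hβ : 0 < B.toReal := ENNReal.toReal_pos hB0 hBtop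
  have hd : d ≠ 0 := finrank_pos.ne'
  have hset : {x : E | s < |φ ((‖x‖ ^ d * B.toReal)⁻¹)|} =
      {x | ‖x‖ ^ d * (B.toReal * θ s) < 1} \ {0} := by
    ext x
    rw [mem_ofPred_eq, abs_of_nonneg (hφ_nonneg _), hφ s _ hs.le, Set.mem_sdiff,
      mem_singleton_iff, mem_ofPred_eq]
    rcases eq_or_ne x 0 with rfl | hx
    · simp [hd, hθ.nonneg s hs.le]
    · have hpos : 0 < ‖x‖ ^ d * B.toReal := by positivity
      rw [← one_div, lt_div_iff₀ hpos, mul_comm, mul_assoc]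
      exact (and_iff_left hx).symm
  rw [hset, measure_sdiff_null (measure_singleton 0),
    addHaar_setOf_norm_pow_finrank_mul_lt_one μ (by positivity), mul_inv,
    ENNReal.ofReal_mul (inv_nonneg.2 hβ.le), ENNReal.ofReal_inv_of_pos hβ,
    ENNReal.ofReal_inv_of_pos hθs, ENNReal.ofReal_toReal hBtop, mul_right_comm,
    ENNReal.inv_mul_cancel hB0 hBtop, one_mul]

end Extremal

section WeakNorm

variable {n : ℕ} {θ θ₁ θ₂ : ℝ → ℝ} {h : EuclideanSpace ℝ (Fin n) → ℝ}

lemma wNorm_le_ofReal {a : ℝ} (ha : 0 < a)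
    (hadm : ∀ t : ℝ, 0 < t → ENNReal.ofReal (θ t) * volume {x | a * t < |h x|} ≤ 1) :
    wNorm n θ h ≤ ENNReal.ofReal a :=
  sInf_le ⟨a, ⟨ha, hadm⟩, rfl⟩

lemma exists_pos_of_wNorm_lt_top (hw : wNorm n θ h < ⊤) :
    ∃ a : ℝ, 0 < a ∧
      ∀ t : ℝ, 0 < t → ENNReal.ofReal (θ t) * volume {x | a * t < |h x|} ≤ 1 := by
  obtain ⟨-, ⟨a, ha, rfl⟩, -⟩ := sInf_lt_iff.1 hw
  exact ⟨a, ha⟩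

lemma wNorm_le_ofReal_mul_wNorm {C : ℝ} (hC : 0 < C)
    (hθ : ∀ t : ℝ, 0 < t → θ₁ t ≤ θ₂ (C * t)) (h : EuclideanSpace ℝ (Fin n) → ℝ) :
    wNorm n θ₁ h ≤ ENNReal.ofReal C * wNorm n θ₂ h := by
  have hC0 : ENNReal.ofReal C ≠ 0 := ENNReal.ofReal_pos.2 hC |>.ne'
  rw [mul_comm, ← ENNReal.div_le_iff_le_mul (Or.inl hC0) (Or.inl ENNReal.ofReal_ne_top)]
  refine le_sInf ?_
  rintro _ ⟨a, ⟨ha, hadm⟩, rfl⟩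
  rw [ENNReal.div_le_iff_le_mul (Or.inl hC0) (Or.inl ENNReal.ofReal_ne_top),
    ← ENNReal.ofReal_mul ha.le]
  refine wNorm_le_ofReal (mul_pos ha hC) fun t ht => ?_
  calc ENNReal.ofReal (θ₁ t) * volume {x | a * C * t < |h x|}
      ≤ ENNReal.ofReal (θ₂ (C * t)) * volume {x | a * (C * t) < |h x|} := by
        rw [mul_assoc a]
        exact mul_le_mul_left (ENNReal.ofReal_le_ofReal (hθ t ht)) _
    _ ≤ 1 := hadm (C * t) (mul_pos hC ht)

lemma wNorm_le_one_of_volume_setOf_lt_abs_eq_inv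
    (hdist : ∀ s : ℝ, 0 < s → volume {x | s < |h x|} = (ENNReal.ofReal (θ s))⁻¹) :
    wNorm n θ h ≤ 1 := by
  simpa using wNorm_le_ofReal one_pos fun t ht => by
    simpa only [one_mul, hdist t ht] using ENNReal.mul_inv_le_one _

lemma exists_le_comp_mul_of_wNorm_lt_top
    (hdist : ∀ s : ℝ, 0 < s → volume {x | s < |h x|} = (ENNReal.ofReal (θ₂ s))⁻¹)
    (hθ₂ : ∀ s : ℝ, 0 < s → 0 < θ₂ s)
    (hw : wNorm n θ₁ h < ⊤) : ∃ C : ℝ, 0 < C ∧ ∀ t : ℝ, 0 < t → θ₁ t ≤ θ₂ (C * t) := by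
  obtain ⟨a, ha, hadm⟩ := exists_pos_of_wNorm_lt_top hw
  refine ⟨a, ha, fun t ht => ?_⟩
  have hat : 0 < a * t := mul_pos ha ht
  have hle := hadm t ht
  rw [hdist _ hat, ENNReal.mul_inv_le_iff (ENNReal.ofReal_pos.2 (hθ₂ _ hat)).ne'
    ENNReal.ofReal_ne_top, one_mul] at hle
  exact (ENNReal.ofReal_le_ofReal_iff (hθ₂ _ hat).le).1 hle

end WeakNorm

theorem stmt_13_general (n : ℕ) (hn : 1 ≤ n) (θ₁ θ₂ : ℝ → ℝ) (h2 : MemF θ₂) :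
    ((∃ C : ℝ, 0 < C ∧ ∀ t : ℝ, 0 < t → θ₁ t ≤ θ₂ (C * t)) ↔
      (∀ h : EuclideanSpace ℝ (Fin n) → ℝ, Measurable h →
        wNorm n θ₂ h < ⊤ → wNorm n θ₁ h < ⊤))
    ∧ ((∀ h : EuclideanSpace ℝ (Fin n) → ℝ, Measurable h →
        wNorm n θ₂ h < ⊤ → wNorm n θ₁ h < ⊤) ↔
      (∃ C : ℝ, 0 < C ∧ ∀ h : EuclideanSpace ℝ (Fin n) → ℝ, Measurable h →
        wNorm n θ₁ h ≤ ENNReal.ofReal C * wNorm n θ₂ h)) := by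
  have : Nonempty (Fin n) := ⟨⟨0, hn⟩⟩
  obtain ⟨g, hg_meas, hg_dist⟩ := exists_measurable_addHaar_setOf_lt_abs_eq_inv
    (volume : Measure (EuclideanSpace ℝ (Fin n))) h2
  have dominated_of_finite : (∀ h : EuclideanSpace ℝ (Fin n) → ℝ, Measurable h →
      wNorm n θ₂ h < ⊤ → wNorm n θ₁ h < ⊤) →
      ∃ C : ℝ, 0 < C ∧ ∀ t : ℝ, 0 < t → θ₁ t ≤ θ₂ (C * t) := fun H =>
    exists_le_comp_mul_of_wNorm_lt_top hg_dist (fun _ => h2.pos_s13) (H g hg_meas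
      ((wNorm_le_one_of_volume_setOf_lt_abs_eq_inv hg_dist).trans_lt ENNReal.one_lt_top))
  refine ⟨⟨fun ⟨C, hC, hθ⟩ h _ hw => ?_, dominated_of_finite⟩,
    ⟨fun H => ?_, fun ⟨_, _, hbound⟩ h hh hw => ?_⟩⟩
  · exact (wNorm_le_ofReal_mul_wNorm hC hθ h).trans_lt
      (ENNReal.mul_lt_top ENNReal.ofReal_lt_top hw)
  · obtain ⟨C, hC, hθ⟩ := dominated_of_finite H
    exact ⟨C, hC, fun h _ => wNorm_le_ofReal_mul_wNorm hC hθ h⟩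
  · exact (hbound h hh).trans_lt (ENNReal.mul_lt_top ENNReal.ofReal_lt_top hw)

theorem stmt_13 (n : ℕ) (hn : 1 ≤ n) (θ₁ θ₂ : ℝ → ℝ) (h1 : MemF θ₁) (h2 : MemF θ₂) :
    ((∃ C : ℝ, 0 < C ∧ ∀ t : ℝ, 0 < t → θ₁ t ≤ θ₂ (C * t)) ↔
      (∀ h : EuclideanSpace ℝ (Fin n) → ℝ, Measurable h →
        wNorm n θ₂ h < ⊤ → wNorm n θ₁ h < ⊤))
    ∧ ((∀ h : EuclideanSpace ℝ (Fin n) → ℝ, Measurable h →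
        wNorm n θ₂ h < ⊤ → wNorm n θ₁ h < ⊤) ↔
      (∃ C : ℝ, 0 < C ∧ ∀ h : EuclideanSpace ℝ (Fin n) → ℝ, Measurable h →
        wNorm n θ₁ h ≤ ENNReal.ofReal C * wNorm n θ₂ h)) :=
  stmt_13_general n hn θ₁ θ₂ h2
end

section
/- Let θ be a Young function, let (hₙ) be a sequence of measurable functions ℝⁿ → [0,∞) that is pointwise nondecreasing in n, and let h : ℝⁿ → [0,∞) be measurable with hₙ(x) → h(x) for volume-almost every x and ‖h‖_{w,θ} < ∞. Then ‖hₙ‖_{w,θ} → ‖h‖_{w,θ} as n → ∞. -/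
/-!
An admissible level `a` for each `hₖ` is admissible for `h`: every superlevel set
`{a t < |h|}` is, up to a null set, the increasing union of the sets `{a t < |hₖ|}`, so its
measure is the supremum of theirs. Hence `‖h‖ ≤ supₖ ‖hₖ‖`, and the reverse inequality
together with the monotonicity of `k ↦ ‖hₖ‖` follows from `|hₖ| ≤ |h|` a.e.
-/

open MeasureTheory Filter ENNReal

open Topology

section WeakAdmissible

variable {α : Type*} [MeasurableSpace α] (μ : Measure α) (θ : ℝ → ℝ)

/-- The levels `a` over which `wNorm` takes the infimum. -/
def WeakAdmissible (f : α → ℝ) (a : ℝ) : Prop :=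
  ∀ t : ℝ, 0 < t → ENNReal.ofReal (θ t) * μ {x | a * t < |f x|} ≤ 1

variable {μ θ}

lemma WeakAdmissible.mono_ae {f g : α → ℝ} {a : ℝ} (hf : WeakAdmissible μ θ f a)
    (hgf : ∀ᵐ x ∂μ, |g x| ≤ |f x|) : WeakAdmissible μ θ g a := fun t ht =>
  (mul_le_mul_right (measure_mono_ae <| hgf.mono fun _ hx hxg => hxg.trans_le hx) _).trans
    (hf t ht)

lemma WeakAdmissible.mono_level {f : α → ℝ} {a b : ℝ} (hf : WeakAdmissible μ θ f a)
    (hab : a ≤ b) : WeakAdmissible μ θ f b := fun t ht =>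
  (mul_le_mul_right (measure_mono fun _ hx =>
    (mul_le_mul_of_nonneg_right hab ht.le).trans_lt hx) _).trans (hf t ht)

lemma WeakAdmissible.of_tendsto_abs {f : ℕ → α → ℝ} {g : α → ℝ} {a : ℝ}
    (hmono : ∀ x, Monotone fun k => |f k x|)
    (hlim : ∀ᵐ x ∂μ, Tendsto (fun k => |f k x|) atTop (𝓝 |g x|))
    (hf : ∀ k, WeakAdmissible μ θ (f k) a) : WeakAdmissible μ θ g a := by
  intro t ht
  have hsub : μ {x | a * t < |g x|} ≤ μ (⋃ k, {x | a * t < |f k x|}) :=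
    measure_mono_ae <| hlim.mono fun x hx hxg =>
      Set.mem_iUnion.2 (hx.eventually (eventually_gt_nhds hxg)).exists
  have hunion : μ (⋃ k, {x | a * t < |f k x|}) = ⨆ k, μ {x | a * t < |f k x|} :=
    Monotone.measure_iUnion fun _ _ hij x hx => lt_of_lt_of_le hx (hmono x hij)
  calc ENNReal.ofReal (θ t) * μ {x | a * t < |g x|}
      ≤ ⨆ k, ENNReal.ofReal (θ t) * μ {x | a * t < |f k x|} := by
        rw [← ENNReal.mul_iSup, ← hunion]
        exact mul_le_mul_right hsub _
    _ ≤ 1 := iSup_le fun k => hf k t ht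

end WeakAdmissible

section wNorm

variable {n : ℕ} {θ : ℝ → ℝ}

lemma wNorm_le_ofReal_s18 {f : EuclideanSpace ℝ (Fin n) → ℝ} {a : ℝ} (ha : 0 < a)
    (hf : WeakAdmissible volume θ f a) : wNorm n θ f ≤ ENNReal.ofReal a :=
  sInf_le ⟨a, ⟨ha, hf⟩, rfl⟩

lemma weakAdmissible_of_wNorm_lt {f : EuclideanSpace ℝ (Fin n) → ℝ} {a : ℝ}
    (hf : wNorm n θ f < ENNReal.ofReal a) : WeakAdmissible volume θ f a := by
  obtain ⟨_, ⟨b, ⟨hb, hfb⟩, rfl⟩, hba⟩ := sInf_lt_iff.mp hf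
  exact WeakAdmissible.mono_level hfb ((ENNReal.ofReal_lt_ofReal_iff_of_nonneg hb.le).mp hba).le

lemma wNorm_mono_ae {f g : EuclideanSpace ℝ (Fin n) → ℝ}
    (hgf : ∀ᵐ x ∂(volume : Measure (EuclideanSpace ℝ (Fin n))), |g x| ≤ |f x|) :
    wNorm n θ g ≤ wNorm n θ f := by
  apply sInf_le_sInf
  rintro _ ⟨a, ⟨ha, hfa⟩, rfl⟩
  exact ⟨a, ⟨ha, WeakAdmissible.mono_ae hfa hgf⟩, rfl⟩

lemma wNorm_le_iSup_of_tendsto_abs {f : ℕ → EuclideanSpace ℝ (Fin n) → ℝ}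
    {g : EuclideanSpace ℝ (Fin n) → ℝ} (hmono : ∀ x, Monotone fun k => |f k x|)
    (hlim : ∀ᵐ x ∂(volume : Measure (EuclideanSpace ℝ (Fin n))),
      Tendsto (fun k => |f k x|) atTop (𝓝 |g x|)) :
    wNorm n θ g ≤ ⨆ k, wNorm n θ (f k) := by
  refine le_of_forall_gt_imp_ge_of_dense fun c hc => ?_
  rcases eq_or_ne c ⊤ with rfl | hc_top
  · exact le_top
  have hpos : 0 < c.toReal := ENNReal.toReal_pos (pos_of_gt hc).ne' hc_top
  rw [← ENNReal.ofReal_toReal hc_top] at hc ⊢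
  refine wNorm_le_ofReal_s18 hpos (.of_tendsto_abs hmono hlim fun k => ?_)
  exact weakAdmissible_of_wNorm_lt ((le_iSup (fun k => wNorm n θ (f k)) k).trans_lt hc)

lemma tendsto_wNorm_of_tendsto_abs {f : ℕ → EuclideanSpace ℝ (Fin n) → ℝ}
    {g : EuclideanSpace ℝ (Fin n) → ℝ} (hmono : ∀ x, Monotone fun k => |f k x|)
    (hlim : ∀ᵐ x ∂(volume : Measure (EuclideanSpace ℝ (Fin n))),
      Tendsto (fun k => |f k x|) atTop (𝓝 |g x|)) :
    Tendsto (fun k => wNorm n θ (f k)) atTop (𝓝 (wNorm n θ g)) := by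
  have hle : ∀ k, wNorm n θ (f k) ≤ wNorm n θ g := fun k =>
    wNorm_mono_ae (hlim.mono fun x hx => (hmono x).ge_of_tendsto hx k)
  have hsup : ⨆ k, wNorm n θ (f k) = wNorm n θ g :=
    le_antisymm (iSup_le hle) (wNorm_le_iSup_of_tendsto_abs hmono hlim)
  exact hsup ▸ tendsto_atTop_iSup fun i j hij =>
    wNorm_mono_ae (.of_forall fun x => hmono x hij)

end wNorm

theorem stmt_18_general (n : ℕ) (θ : ℝ → ℝ)
    (hseq : ℕ → EuclideanSpace ℝ (Fin n) → ℝ)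
    (hnonneg : ∀ k x, 0 ≤ hseq k x)
    (hmono : ∀ x, Monotone (fun k => hseq k x))
    (h : EuclideanSpace ℝ (Fin n) → ℝ)
    (hconv : ∀ᵐ x ∂(volume : Measure (EuclideanSpace ℝ (Fin n))),
      Tendsto (fun k => hseq k x) atTop (nhds (h x))) :
    Tendsto (fun k => wNorm n θ (hseq k)) atTop (nhds (wNorm n θ h)) := by
  have habs_mono : ∀ x, Monotone fun k => |hseq k x| := fun x i j hij => by
    simpa only [abs_of_nonneg (hnonneg _ x)] using hmono x hij
  exact tendsto_wNorm_of_tendsto_abs habs_mono (hconv.mono fun _ hx => hx.abs)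

theorem stmt_18 (n : ℕ) (hn : 1 ≤ n) (θ : ℝ → ℝ) (hθ : IsYoung θ)
    (hseq : ℕ → EuclideanSpace ℝ (Fin n) → ℝ) (hmeas : ∀ k, Measurable (hseq k))
    (hnonneg : ∀ k x, 0 ≤ hseq k x)
    (hmono : ∀ x, Monotone (fun k => hseq k x))
    (h : EuclideanSpace ℝ (Fin n) → ℝ) (hh : Measurable h) (hnn : ∀ x, 0 ≤ h x)
    (hconv : ∀ᵐ x ∂(volume : Measure (EuclideanSpace ℝ (Fin n))),
      Tendsto (fun k => hseq k x) atTop (nhds (h x)))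
    (hfin : wNorm n θ h < ⊤) :
    Tendsto (fun k => wNorm n θ (hseq k)) atTop (nhds (wNorm n θ h)) :=
  stmt_18_general n θ hseq hnonneg hmono h hconv
end
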